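/- arXiv:1306.4166 — 4 statements merged into one kernel-verified Lean document; each statement's English description precedes it below -/
import Mathlib

section
/- For μ ∈ ℝ and v > 1, the equation N(x)/N_{μ,v}(x) = Φ(x)/Φ_{μ,v}(x) has a unique real solution x = α, and this solution satisfies α > μ/(1-v). Here N and Φ are the density and CDF of the standard normal distribution, and N_{μ,v}, Φ_{μ,v} those of the normal distribution with mean μ and variance v. -/
noncomputable def normalPDF (μ v x : ℝ) : ℝ :=
  (Real.sqrt (2 * Real.pi * v))⁻¹ * Real.exp (-(x - μ)^2 / (2 * v))

noncomputable def normalCDF (μ v x : ℝ) : ℝ :=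
  ∫ t in Set.Iio x, normalPDF μ v t

open Real MeasureTheory Set Filter Topology

/-!
Let `ρ = N / N_{μ,v}`; explicitly `ρ x = √v · exp ((x - μ)² / (2v) - x² / 2)`, so `ρ` increases
left of `x₀ = μ / (1 - v)`, decreases right of it and tends to `0` at `+∞`. The equation says
`G x = 0` for `G = Φ_{μ,v} · ρ - Φ`, and `G' = Φ_{μ,v} · ρ'` because `Φ_{μ,v}' · ρ = N = Φ'`.
Hence `G` is strictly decreasing on `[x₀, ∞)`. On `(-∞, x₀]` it is positive, being
`∫_{t < x} N_{μ,v}(t) (ρ x - ρ t) dt`, and it is negative far to the right, so `G` has exactly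
one zero, and that zero lies beyond `x₀`.
-/

lemma setIntegral_Iio_pos {f : ℝ → ℝ} {x : ℝ} (hf : IntegrableOn f (Iio x))
    (hpos : ∀ t < x, 0 < f t) : 0 < ∫ t in Iio x, f t := by
  have hsupport : Iio x ⊆ Function.support f := fun t ht => (hpos t ht).ne'
  rw [setIntegral_pos_iff_support_of_nonneg_ae
    ((ae_restrict_iff' measurableSet_Iio).2 (ae_of_all _ fun t ht => (hpos t ht).le)) hf,
    inter_eq_right.2 hsupport]
  simp

section NormalDistribution

variable (μ : ℝ) {v : ℝ}

lemma normalPDF_eq_gaussianPDFReal (hv : 0 ≤ v) :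
    normalPDF μ v = ProbabilityTheory.gaussianPDFReal μ v.toNNReal := by
  ext x
  simp [normalPDF, ProbabilityTheory.gaussianPDFReal, hv]

lemma normalPDF_pos (hv : 0 < v) (x : ℝ) : 0 < normalPDF μ v x := by
  rw [normalPDF_eq_gaussianPDFReal μ hv.le]
  exact ProbabilityTheory.gaussianPDFReal_pos _ _ _ (by simpa using hv)

lemma integrable_normalPDF (hv : 0 ≤ v) : Integrable (normalPDF μ v) := by
  rw [normalPDF_eq_gaussianPDFReal μ hv]
  exact ProbabilityTheory.integrable_gaussianPDFReal _ _

lemma integral_normalPDF (hv : 0 < v) : ∫ x, normalPDF μ v x = 1 := by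
  rw [normalPDF_eq_gaussianPDFReal μ hv.le]
  exact ProbabilityTheory.integral_gaussianPDFReal_eq_one _ (by simpa using hv)

lemma continuous_normalPDF : Continuous (normalPDF μ v) := by
  unfold normalPDF
  fun_prop

lemma normalCDF_pos (hv : 0 < v) (x : ℝ) : 0 < normalCDF μ v x :=
  setIntegral_Iio_pos (integrable_normalPDF μ hv.le).integrableOn fun t _ => normalPDF_pos μ hv t

lemma normalCDF_le_one (hv : 0 < v) (x : ℝ) : normalCDF μ v x ≤ 1 := by
  rw [normalCDF, ← integral_normalPDF μ hv]
  exact setIntegral_le_integral (integrable_normalPDF μ hv.le)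
    (ae_of_all _ fun t => (normalPDF_pos μ hv t).le)

lemma normalCDF_mono (hv : 0 < v) : Monotone (normalCDF μ v) := fun _ _ hxy =>
  setIntegral_mono_set (integrable_normalPDF μ hv.le).integrableOn
    (ae_of_all _ fun t => (normalPDF_pos μ hv t).le) (Iio_subset_Iio hxy).eventuallyLE

lemma hasDerivAt_normalCDF (hv : 0 ≤ v) (x : ℝ) :
    HasDerivAt (normalCDF μ v) (normalPDF μ v x) x := by
  have hint := integrable_normalPDF μ hv
  have hprimitive : (fun y => normalCDF μ v 0 + ∫ t in (0 : ℝ)..y, normalPDF μ v t)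
      = normalCDF μ v := by
    ext y
    rw [normalCDF, normalCDF,
      ← intervalIntegral.integral_Iio_sub_Iio' hint.integrableOn hint.integrableOn]
    ring
  rw [← hprimitive]
  exact (intervalIntegral.integral_hasDerivAt_right hint.intervalIntegrable
    (continuous_normalPDF μ).stronglyMeasurable.stronglyMeasurableAtFilter
    (continuous_normalPDF μ).continuousAt).const_add _

end NormalDistribution

noncomputable def normalPDFRatio (μ v x : ℝ) : ℝ :=
  normalPDF 0 1 x / normalPDF μ v x

noncomputable def normalGap (μ v x : ℝ) : ℝ :=
  normalCDF μ v x * normalPDFRatio μ v x - normalCDF 0 1 x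

section Ratio

variable (μ : ℝ) {v : ℝ}

lemma normalPDFRatio_eq (hv : 0 < v) (x : ℝ) :
    normalPDFRatio μ v x = √v * exp ((x - μ) ^ 2 / (2 * v) - x ^ 2 / 2) := by
  rw [normalPDFRatio, normalPDF, normalPDF, mul_one, mul_comm (2 * π) v, sqrt_mul hv.le,
    exp_sub, sub_zero]
  field_simp
  rw [← exp_add, ← exp_add]
  ring_nf

lemma normalPDFRatio_pos (hv : 0 < v) (x : ℝ) : 0 < normalPDFRatio μ v x := by
  rw [normalPDFRatio_eq μ hv]
  have := sqrt_pos.2 hv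
  positivity

lemma hasDerivAt_normalPDFRatio (hv : 0 < v) (x : ℝ) :
    HasDerivAt (normalPDFRatio μ v) (normalPDFRatio μ v x * ((x - μ) / v - x)) x := by
  have hexponent : HasDerivAt (fun x => (x - μ) ^ 2 / (2 * v) - x ^ 2 / 2)
      ((x - μ) / v - x) x := by
    refine ((((hasDerivAt_id x).sub_const μ).pow 2).div_const (2 * v)).sub
      (((hasDerivAt_id x).pow 2).div_const 2) |>.congr_deriv ?_
    simp only [id, Nat.cast_ofNat]
    field_simp
    ring
  rw [funext (normalPDFRatio_eq μ hv)]
  exact (hexponent.exp.const_mul √v).congr_deriv (by ring)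

variable {μ}

lemma normalPDFRatio_deriv_pos (hv : 1 < v) {x : ℝ} (hx : x < μ / (1 - v)) :
    0 < normalPDFRatio μ v x * ((x - μ) / v - x) := by
  have hv0 : 0 < v := by linarith
  rw [lt_div_iff_of_neg (by linarith)] at hx
  refine mul_pos (normalPDFRatio_pos μ hv0 x) ?_
  rw [sub_pos, lt_div_iff₀ hv0]
  linarith

lemma normalPDFRatio_deriv_neg (hv : 1 < v) {x : ℝ} (hx : μ / (1 - v) < x) :
    normalPDFRatio μ v x * ((x - μ) / v - x) < 0 := by
  have hv0 : 0 < v := by linarith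
  rw [div_lt_iff_of_neg (by linarith)] at hx
  refine mul_neg_of_pos_of_neg (normalPDFRatio_pos μ hv0 x) ?_
  rw [sub_neg, div_lt_iff₀ hv0]
  linarith

lemma strictMonoOn_normalPDFRatio (hv : 1 < v) :
    StrictMonoOn (normalPDFRatio μ v) (Iic (μ / (1 - v))) := by
  have hv0 : 0 < v := by linarith
  refine strictMonoOn_of_deriv_pos (convex_Iic _)
    (fun x _ => (hasDerivAt_normalPDFRatio μ hv0 x).continuousAt.continuousWithinAt) ?_
  intro x hx
  rw [interior_Iic] at hx
  rw [(hasDerivAt_normalPDFRatio μ hv0 x).deriv]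
  exact normalPDFRatio_deriv_pos hv hx

lemma tendsto_normalPDFRatio_atTop (hv : 1 < v) :
    Tendsto (normalPDFRatio μ v) atTop (𝓝 0) := by
  have hv0 : 0 < v := by linarith
  have hexponent : Tendsto (fun x => (x - μ) ^ 2 / (2 * v) - x ^ 2 / 2) atTop atBot := by
    have hcoeff : 1 / (2 * v) - 1 / 2 < 0 := by
      rw [sub_neg, div_lt_div_iff₀ (by linarith) two_pos]
      linarith
    have hquadratic : Tendsto
        (fun x => x * ((1 / (2 * v) - 1 / 2) * x + -μ / v) + μ ^ 2 / (2 * v)) atTop atBot :=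
      tendsto_atBot_add_const_right _ _ <| tendsto_id.atTop_mul_atBot₀ <|
        tendsto_atBot_add_const_right _ _ <| (tendsto_const_mul_atBot_of_neg hcoeff).2 tendsto_id
    refine hquadratic.congr fun x => ?_
    field_simp
    ring
  rw [funext (normalPDFRatio_eq μ hv0), ← mul_zero √v]
  exact (tendsto_exp_atBot.comp hexponent).const_mul _

end Ratio

section Gap

variable {μ v : ℝ}

lemma hasDerivAt_normalGap (hv : 0 < v) (x : ℝ) :
    HasDerivAt (normalGap μ v)
      (normalCDF μ v x * (normalPDFRatio μ v x * ((x - μ) / v - x))) x := by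
  have hcancel : normalPDF μ v x * normalPDFRatio μ v x = normalPDF 0 1 x :=
    mul_div_cancel₀ _ (normalPDF_pos μ hv x).ne'
  refine (((hasDerivAt_normalCDF μ hv.le x).mul (hasDerivAt_normalPDFRatio μ hv x)).sub
    (hasDerivAt_normalCDF 0 zero_le_one x)).congr_deriv ?_
  rw [hcancel]
  ring

lemma continuous_normalGap (hv : 0 < v) : Continuous (normalGap μ v) :=
  continuous_iff_continuousAt.2 fun x => (hasDerivAt_normalGap hv x).continuousAt

lemma strictAntiOn_normalGap (hv : 1 < v) :
    StrictAntiOn (normalGap μ v) (Ici (μ / (1 - v))) := by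
  have hv0 : 0 < v := by linarith
  refine strictAntiOn_of_deriv_neg (convex_Ici _) (continuous_normalGap hv0).continuousOn ?_
  intro x hx
  rw [interior_Ici] at hx
  rw [(hasDerivAt_normalGap hv0 x).deriv]
  exact mul_neg_of_pos_of_neg (normalCDF_pos μ hv0 x) (normalPDFRatio_deriv_neg hv hx)

lemma normalGap_pos_of_le (hv : 1 < v) {x : ℝ} (hx : x ≤ μ / (1 - v)) :
    0 < normalGap μ v x := by
  have hv0 : 0 < v := by linarith
  have hpdf : ∀ t, normalPDF 0 1 t = normalPDFRatio μ v t * normalPDF μ v t := fun t =>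
    (div_mul_cancel₀ _ (normalPDF_pos μ hv0 t).ne').symm
  have hint1 : IntegrableOn (fun t => normalPDFRatio μ v x * normalPDF μ v t) (Iio x) :=
    ((integrable_normalPDF μ hv0.le).const_mul _).integrableOn
  have hint2 : IntegrableOn (normalPDF 0 1) (Iio x) :=
    (integrable_normalPDF 0 zero_le_one).integrableOn
  have hintegral : normalGap μ v x
      = ∫ t in Iio x, (normalPDFRatio μ v x * normalPDF μ v t - normalPDF 0 1 t) := by
    rw [integral_sub hint1 hint2, integral_const_mul, normalGap, normalCDF, normalCDF, mul_comm]
  rw [hintegral]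
  refine setIntegral_Iio_pos (hint1.sub hint2) fun t ht => ?_
  have hmono := strictMonoOn_normalPDFRatio hv (ht.le.trans hx) hx ht
  rw [hpdf, ← sub_mul]
  exact mul_pos (sub_pos.2 hmono) (normalPDF_pos μ hv0 t)

lemma exists_normalGap_neg (hv : 1 < v) : ∃ X, μ / (1 - v) < X ∧ normalGap μ v X < 0 := by
  have hv0 : 0 < v := by linarith
  obtain ⟨X, ⟨hX0, hXgt⟩, hXsmall⟩ := ((eventually_ge_atTop 0).and
    (eventually_gt_atTop (μ / (1 - v)))).and
    ((tendsto_normalPDFRatio_atTop hv).eventually_lt_const (normalCDF_pos 0 one_pos 0))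
    |>.exists
  refine ⟨X, hXgt, sub_neg.2 ?_⟩
  calc normalCDF μ v X * normalPDFRatio μ v X ≤ normalPDFRatio μ v X :=
        mul_le_of_le_one_left (normalPDFRatio_pos μ hv0 X).le (normalCDF_le_one μ hv0 X)
    _ < normalCDF 0 1 0 := hXsmall
    _ ≤ normalCDF 0 1 X := normalCDF_mono 0 one_pos hX0

lemma normalGap_eq_zero_iff (hv : 0 < v) (x : ℝ) :
    normalGap μ v x = 0 ↔
      normalPDF 0 1 x / normalPDF μ v x = normalCDF 0 1 x / normalCDF μ v x := by
  rw [normalGap, sub_eq_zero, eq_div_iff (normalCDF_pos μ hv x).ne', mul_comm, normalPDFRatio]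

end Gap

theorem stmt1 (μ v : ℝ) (hv : 1 < v) :
    ∃ α : ℝ, α > μ / (1 - v) ∧
      normalPDF 0 1 α / normalPDF μ v α
        = normalCDF 0 1 α / normalCDF μ v α ∧
      ∀ x : ℝ, normalPDF 0 1 x / normalPDF μ v x
        = normalCDF 0 1 x / normalCDF μ v x → x = α := by
  have hv0 : 0 < v := by linarith
  obtain ⟨X, hXgt, hXneg⟩ := exists_normalGap_neg (μ := μ) hv
  obtain ⟨α, -, hα⟩ := intermediate_value_Icc' hXgt.le (continuous_normalGap hv0).continuousOn
    ⟨hXneg.le, (normalGap_pos_of_le hv le_rfl).le⟩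
  have beyond_peak : ∀ {x}, normalGap μ v x = 0 → μ / (1 - v) < x := fun hx =>
    lt_of_not_ge fun hle => (normalGap_pos_of_le hv hle).ne' hx
  refine ⟨α, beyond_peak hα, (normalGap_eq_zero_iff hv0 α).1 hα, fun x hx => ?_⟩
  have hx0 := (normalGap_eq_zero_iff hv0 x).2 hx
  exact strictAntiOn_normalGap hv |>.injOn (beyond_peak hx0).le (beyond_peak hα).le
    (hx0.trans hα.symm)
end

section
/- Let U_L be the uniform distribution on {1,...,L} and Q a probability distribution on a finite set. Then the maximum fidelity over majorization conversions from U_L to Q equals √(Σ_{i=1}^{L} Q↓(i)), i.e., max{ F(P', Q) : U_L ≺ P' } = √(Σ_{i=1}^L Q↓(i)), where Q↓ are the values of Q sorted in decreasing order. -/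
/-!
A distribution `P'` with `U_L ≺ P'` has `maxSum P' L ≥ 1`, so it vanishes outside a set `S` of at
most `L` points, and Cauchy–Schwarz on `S` gives `F(P', Q) ≤ √(∑_S Q) ≤ √(maxSum Q L)`.
Conversely, `Q` conditioned on a set `S` of its `L` largest values attains this bound, and it
majorizes `U_L` because some `l` points of `S` always carry at least a fraction `l / |S|` of the
mass of `S`.
-/

/-- The sum of the `l` largest values of `P` (i.e. `∑_{i=1}^{l} P↓(i)` for a nonnegative `P`). -/
noncomputable def maxSum {α : Type*} [Fintype α] (P : α → ℝ) (l : ℕ) : ℝ :=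
  (Finset.univ.powerset.filter (fun s => s.card ≤ l)).sup'
    ⟨∅, by simp⟩ (fun s => ∑ x ∈ s, P x)

/-- `P ≺ Q` : `P` is majorized by `Q`. -/
def Majorized {α β : Type*} [Fintype α] [Fintype β] (P : α → ℝ) (Q : β → ℝ) : Prop :=
  ∀ l : ℕ, maxSum P l ≤ maxSum Q l

open Finset

theorem Finset.exists_subset_card_eq_mul_sum_le {ι : Type*} [DecidableEq ι] (f : ι → ℝ)
    (S : Finset ι) {l : ℕ} (hl : l ≤ #S) :
    ∃ T ⊆ S, #T = l ∧ l * ∑ x ∈ S, f x ≤ #S * ∑ x ∈ T, f x := by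
  induction S using Finset.strongInduction with
  | H S ih =>
    rcases hl.eq_or_lt with rfl | hlt
    · exact ⟨S, subset_rfl, rfl, le_rfl⟩
    obtain ⟨m, hm, hmin⟩ := S.exists_min_image f (card_pos.mp (l.zero_le.trans_lt hlt))
    have hcard : #(S.erase m) + 1 = #S := card_erase_add_one hm
    obtain ⟨T, hTS, hTl, hT⟩ := ih (S.erase m) (erase_ssubset hm) (by omega)
    have hmT : l * f m ≤ ∑ x ∈ T, f x := by
      simpa [hTl] using card_nsmul_le_sum T f (f m)
        fun x hx => hmin x (mem_of_mem_erase (hTS hx))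
    refine ⟨T, hTS.trans (erase_subset m S), hTl, ?_⟩
    rw [← add_sum_erase S f hm, ← hcard]
    push_cast
    linarith

section MaxSum

variable {α : Type*} [Fintype α]

theorem le_maxSum (P : α → ℝ) {l : ℕ} {s : Finset α} (hs : #s ≤ l) :
    ∑ x ∈ s, P x ≤ maxSum P l :=
  le_sup' (f := fun s => ∑ x ∈ s, P x) (by simp [hs])

theorem maxSum_le (P : α → ℝ) {l : ℕ} {c : ℝ}
    (h : ∀ s : Finset α, #s ≤ l → ∑ x ∈ s, P x ≤ c) : maxSum P l ≤ c :=
  sup'_le _ _ fun s hs => h s (mem_filter.mp hs).2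

theorem exists_maxSum_eq (P : α → ℝ) (l : ℕ) :
    ∃ s : Finset α, #s ≤ l ∧ maxSum P l = ∑ x ∈ s, P x := by
  obtain ⟨s, hs, h⟩ := exists_mem_eq_sup' (f := fun s : Finset α => ∑ x ∈ s, P x)
    (⟨∅, by simp⟩ : (univ.powerset.filter fun s : Finset α => #s ≤ l).Nonempty)
  exact ⟨s, (mem_filter.mp hs).2, h⟩

theorem maxSum_pos {P : α → ℝ} {l : ℕ} (hl : 0 < l) (hP : 0 < ∑ x, P x) : 0 < maxSum P l := by
  obtain ⟨y, -, hy⟩ := exists_lt_of_sum_lt (by simpa using hP : ∑ _x : α, (0 : ℝ) < ∑ x, P x)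
  have hyl := le_maxSum P (l := l) (s := {y}) (by rw [card_singleton]; exact hl)
  rw [sum_singleton] at hyl
  simpa using hy.trans_le hyl

theorem maxSum_const {c : ℝ} (hc : 0 ≤ c) (l : ℕ) :
    maxSum (fun _ : α => c) l = min l (Fintype.card α) * c := by
  refine le_antisymm (maxSum_le _ fun s hs => ?_) ?_
  · rw [sum_const, nsmul_eq_mul]
    gcongr
    exact_mod_cast le_min hs (card_le_univ s)
  · obtain ⟨t, -, ht⟩ := exists_subset_card_eq (s := univ) (min_le_right l (Fintype.card α))
    simpa [ht] using le_maxSum (fun _ : α => c) (ht.trans_le (min_le_left _ _))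

theorem exists_support_card_le {P : α → ℝ} (hP0 : ∀ x, 0 ≤ P x) (hP1 : ∑ x, P x = 1) {l : ℕ}
    (h : 1 ≤ maxSum P l) : ∃ S : Finset α, #S ≤ l ∧ ∀ x ∉ S, P x = 0 := by
  classical
  obtain ⟨S, hSl, hS⟩ := exists_maxSum_eq P l
  have hcompl : ∑ x ∈ univ \ S, P x = 0 := by
    have := sum_sdiff (f := P) (subset_univ S)
    linarith [sum_nonneg fun x (_ : x ∈ univ \ S) => hP0 x]
  refine ⟨S, hSl, fun x hx => ?_⟩
  exact (sum_eq_zero_iff_of_nonneg fun y _ => hP0 y).mp hcompl x (by simpa using hx)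

theorem sum_sqrt_mul_le_sqrt_mul_sqrt_maxSum {P Q : α → ℝ} (hP0 : ∀ x, 0 ≤ P x)
    (hQ0 : ∀ x, 0 ≤ Q x) {l : ℕ} {S : Finset α} (hSl : #S ≤ l) (hPS : ∀ x ∉ S, P x = 0) :
    ∑ x, √(P x * Q x) ≤ √(∑ x, P x) * √(maxSum Q l) := calc
  ∑ x, √(P x * Q x) = ∑ x ∈ S, √(P x) * √(Q x) := by
    rw [← sum_subset (subset_univ S) fun x _ hx => by simp [hPS x hx]]
    simp_rw [Real.sqrt_mul (hP0 _)]
  _ ≤ √(∑ x ∈ S, P x) * √(∑ x ∈ S, Q x) := Real.sum_sqrt_mul_sqrt_le S hP0 hQ0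
  _ ≤ √(∑ x, P x) * √(maxSum Q l) :=
    mul_le_mul
      (Real.sqrt_le_sqrt (sum_le_sum_of_subset_of_nonneg (subset_univ S) fun x _ _ => hP0 x))
      (Real.sqrt_le_sqrt (le_maxSum Q hSl)) (Real.sqrt_nonneg _) (Real.sqrt_nonneg _)

end MaxSum

theorem maxSum_uniform {L : ℕ} (l : ℕ) :
    maxSum (fun _ : Fin L => (L : ℝ)⁻¹) l = (min l L : ℕ) / L := by
  rw [maxSum_const (by positivity), Fintype.card_fin, div_eq_mul_inv]

theorem one_le_maxSum_of_uniform_majorized {β : Type*} [Fintype β] {L : ℕ} (hL : 0 < L)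
    {P : β → ℝ} (h : Majorized (fun _ : Fin L => (L : ℝ)⁻¹) P) : 1 ≤ maxSum P L := by
  simpa [maxSum_uniform, hL.ne'] using h L

section CondOn

variable {α : Type*} [DecidableEq α]

noncomputable def condOn (Q : α → ℝ) (S : Finset α) (x : α) : ℝ :=
  if x ∈ S then Q x / ∑ y ∈ S, Q y else 0

variable {Q : α → ℝ} {S : Finset α}

theorem condOn_nonneg (hQ0 : ∀ x, 0 ≤ Q x) (x : α) : 0 ≤ condOn Q S x := by
  unfold condOn
  split_ifs
  · exact div_nonneg (hQ0 x) (sum_nonneg fun y _ => hQ0 y)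
  · exact le_rfl

theorem sum_condOn_of_subset {T : Finset α} (hTS : T ⊆ S) :
    ∑ x ∈ T, condOn Q S x = (∑ x ∈ T, Q x) / ∑ x ∈ S, Q x := by
  rw [sum_div]
  exact sum_congr rfl fun x hx => if_pos (hTS hx)

theorem sum_condOn [Fintype α] (hS : ∑ x ∈ S, Q x ≠ 0) : ∑ x, condOn Q S x = 1 := by
  rw [← sum_subset (subset_univ S) fun x _ hx => by rw [condOn, if_neg hx],
    sum_condOn_of_subset subset_rfl, div_self hS]

theorem sum_sqrt_condOn_mul [Fintype α] (hQ0 : ∀ x, 0 ≤ Q x) :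
    ∑ x, √(condOn Q S x * Q x) = √(∑ x ∈ S, Q x) := by
  have hterm : ∀ x, √(condOn Q S x * Q x) = if x ∈ S then Q x / √(∑ y ∈ S, Q y) else 0 := by
    intro x
    unfold condOn
    split_ifs
    · rw [div_mul_eq_mul_div, ← sq, Real.sqrt_div (sq_nonneg _), Real.sqrt_sq (hQ0 x)]
    · simp
  simp_rw [hterm, sum_ite_mem, univ_inter, ← sum_div, Real.div_sqrt]

theorem uniform_majorized_condOn [Fintype α] {L : ℕ} (hSL : #S ≤ L) (hS : 0 < ∑ x ∈ S, Q x) :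
    Majorized (fun _ : Fin L => (L : ℝ)⁻¹) (condOn Q S) := by
  intro l
  rw [maxSum_uniform]
  rcases le_or_gt #S l with hSl | hlS
  · calc ((min l L : ℕ) : ℝ) / L ≤ 1 :=
          div_le_one_of_le₀ (by exact_mod_cast min_le_right l L) (Nat.cast_nonneg L)
      _ = ∑ x ∈ S, condOn Q S x := by rw [sum_condOn_of_subset subset_rfl, div_self hS.ne']
      _ ≤ maxSum (condOn Q S) l := le_maxSum _ hSl
  · obtain ⟨T, hTS, hTl, hT⟩ := exists_subset_card_eq_mul_sum_le Q S hlS.le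
    have hSpos : (0 : ℝ) < #S := by exact_mod_cast l.zero_le.trans_lt hlS
    calc ((min l L : ℕ) : ℝ) / L ≤ l / #S := by
          rw [min_eq_left (hlS.le.trans hSL)]
          exact div_le_div_of_nonneg_left (Nat.cast_nonneg l) hSpos (by exact_mod_cast hSL)
      _ ≤ (∑ x ∈ T, Q x) / ∑ x ∈ S, Q x := by
          rw [div_le_div_iff₀ hSpos hS, mul_comm (∑ x ∈ T, Q x)]
          exact hT
      _ = ∑ x ∈ T, condOn Q S x := (sum_condOn_of_subset hTS).symm
      _ ≤ maxSum (condOn Q S) l := le_maxSum _ hTl.le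

end CondOn

theorem stmt8 {β : Type*} [Fintype β] (L : ℕ) (hL : 0 < L)
    (Q : β → ℝ) (hQ0 : ∀ y, 0 ≤ Q y) (hQ1 : ∑ y, Q y = 1) :
    IsGreatest
      {r | ∃ P' : β → ℝ, (∀ y, 0 ≤ P' y) ∧ (∑ y, P' y = 1) ∧
        Majorized (fun _ : Fin L => (L : ℝ)⁻¹) P' ∧
        r = ∑ y, Real.sqrt (P' y * Q y)}
      (Real.sqrt (maxSum Q L)) := by
  classical
  obtain ⟨S, hSL, hS⟩ := exists_maxSum_eq Q L
  have hSpos : 0 < ∑ y ∈ S, Q y := hS ▸ maxSum_pos hL (by rw [hQ1]; exact one_pos)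
  refine ⟨⟨condOn Q S, condOn_nonneg hQ0, sum_condOn hSpos.ne',
    uniform_majorized_condOn hSL hSpos, by rw [sum_sqrt_condOn_mul hQ0, hS]⟩, ?_⟩
  rintro _ ⟨P', hP0, hP1, hmaj, rfl⟩
  obtain ⟨S', hS'L, hP'S'⟩ := exists_support_card_le hP0 hP1
    (one_le_maxSum_of_uniform_majorized hL hmaj)
  simpa [hP1] using sum_sqrt_mul_le_sqrt_mul_sqrt_maxSum hP0 hQ0 hS'L hP'S'
end

section
/- Let a = (a_0,...,a_I) and b = (b_0,...,b_I) be probability vectors with a_{i-1}/b_{i-1} > a_i/b_i for all i (all b_i > 0). If c = (c_0,...,c_I) is a probability vector satisfying Σ_{i=0}^{k} a_i ≤ Σ_{i=0}^{k} c_i for all k = 0,...,I, then Σ_{i=0}^{I} √(a_i b_i) ≥ Σ_{i=0}^{I} √(c_i b_i), with equality if and only if c = a. -/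
open Finset

lemma ptwise_aux (u v w : ℝ) (hu : 0 < u) (hv : 0 ≤ v) (hw : 0 < w) :
    v * w ≤ u * w + (v * v - u * u) * (w / (2 * u)) ∧
    (v * w = u * w + (v * v - u * u) * (w / (2 * u)) ↔ v = u) := by
  have key : u * w + (v * v - u * u) * (w / (2 * u)) - v * w = w * (v - u) ^ 2 / (2 * u) := by
    field_simp; ring
  have hpos : 0 ≤ w * (v - u) ^ 2 / (2 * u) := by positivity
  refine ⟨by linarith, ?_, ?_⟩
  · intro h
    have h2 : w * (v - u) ^ 2 / (2 * u) = 0 := by linarith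
    have h3 : w * (v - u) ^ 2 = 0 := by
      rcases div_eq_zero_iff.mp h2 with h3 | h3
      · exact h3
      · exfalso; nlinarith
    rcases mul_eq_zero.mp h3 with h4 | h4
    · exfalso; nlinarith
    · have := pow_eq_zero_iff (n := 2) (by norm_num) |>.mp h4
      linarith [sub_eq_zero.mp this]
  · intro h; rw [h]; ring

theorem stmt9 (I : ℕ) (a b c : Fin (I + 1) → ℝ)
    (ha0 : ∀ i, 0 ≤ a i) (ha1 : ∑ i, a i = 1)
    (hb0 : ∀ i, 0 < b i) (hb1 : ∑ i, b i = 1)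
    (hc0 : ∀ i, 0 ≤ c i) (hc1 : ∑ i, c i = 1)
    (hratio : ∀ i j : Fin (I + 1), i < j → a j / b j < a i / b i)
    (hmaj : ∀ k : Fin (I + 1), ∑ i ∈ Finset.Iic k, a i ≤ ∑ i ∈ Finset.Iic k, c i) :
    (∑ i, Real.sqrt (c i) * Real.sqrt (b i) ≤ ∑ i, Real.sqrt (a i) * Real.sqrt (b i)) ∧
    ((∑ i, Real.sqrt (c i) * Real.sqrt (b i) = ∑ i, Real.sqrt (a i) * Real.sqrt (b i)) ↔ c = a) := by
  -- a is positive except possibly at the last index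
  have hApos : ∀ i : Fin (I + 1), i ≠ Fin.last I → 0 < a i := by
    intro i hi
    rcases (ha0 i).lt_or_eq with h | h
    · exact h
    · exfalso
      have hlt : i < Fin.last I := lt_of_le_of_ne (Fin.le_last i) hi
      have h2 := hratio i (Fin.last I) hlt
      rw [← h, zero_div] at h2
      exact absurd h2 (not_lt.mpr (div_nonneg (ha0 _) (hb0 _).le))
  -- c at the last index is at most a at the last index
  have hclast : c (Fin.last I) ≤ a (Fin.last I) := by
    rcases Nat.eq_zero_or_pos I with hI | hI
    · subst hI
      have h1 : a (Fin.last 0) = 1 := by simpa using ha1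
      have h2 : c (Fin.last 0) = 1 := by simpa using hc1
      rw [h1, h2]
    · set k : Fin (I + 1) := ⟨I - 1, by omega⟩ with hk
      have hsplit : ∀ f : Fin (I + 1) → ℝ, ∑ i, f i = ∑ i ∈ Iic k, f i + f (Fin.last I) := by
        intro f
        have hset : Finset.univ \ {Fin.last I} = Iic k := by
          ext i
          simp only [mem_sdiff, mem_univ, mem_singleton, true_and, mem_Iic, Fin.le_def,
            Fin.ext_iff, Fin.val_last, hk]
          omega
        rw [← hset]
        exact Finset.sum_eq_sum_sdiff_singleton_add (mem_univ _) f
      have hma := hmaj k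
      have ha' := hsplit a
      have hc' := hsplit c
      rw [ha1] at ha'; rw [hc1] at hc'
      linarith
  have hc0' : ∀ i, a i = 0 → c i = 0 := by
    intro i hai
    by_cases hi : i = Fin.last I
    · subst hi
      exact le_antisymm (hai ▸ hclast) (hc0 _)
    · exact absurd hai (hApos i hi).ne'
  -- the weight function
  set T0 : ℝ := 1 + ∑ j, Real.sqrt (b j) / (2 * Real.sqrt (a j)) with hT0
  set t : Fin (I + 1) → ℝ :=
    fun i => if a i = 0 then T0 else Real.sqrt (b i) / (2 * Real.sqrt (a i)) with hT
  have hterm_nonneg : ∀ j : Fin (I + 1), 0 ≤ Real.sqrt (b j) / (2 * Real.sqrt (a j)) := by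
    intro j; positivity
  have ht_mono : ∀ i j : Fin (I + 1), i < j → t i ≤ t j := by
    intro i j hij
    have hine : i ≠ Fin.last I := by
      intro h
      exact absurd (h ▸ hij) (not_lt.mpr (Fin.le_last j))
    have hai : 0 < a i := hApos i hine
    have hti : t i = Real.sqrt (b i) / (2 * Real.sqrt (a i)) := if_neg hai.ne'
    by_cases hj : a j = 0
    · have htj : t j = T0 := if_pos hj
      have hle : Real.sqrt (b i) / (2 * Real.sqrt (a i)) ≤
          ∑ j, Real.sqrt (b j) / (2 * Real.sqrt (a j)) :=
        Finset.single_le_sum (fun j _ => hterm_nonneg j) (mem_univ i)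
      rw [hti, htj, hT0]; linarith
    · have haj : 0 < a j := (ha0 j).lt_of_ne' hj
      have htj : t j = Real.sqrt (b j) / (2 * Real.sqrt (a j)) := if_neg hj
      rw [hti, htj]
      have hr := hratio i j hij
      have hmul : a j * b i < a i * b j := (div_lt_div_iff₀ (hb0 j) (hb0 i)).mp hr
      have hs : Real.sqrt (a j) * Real.sqrt (b i) ≤ Real.sqrt (a i) * Real.sqrt (b j) := by
        rw [← Real.sqrt_mul haj.le, ← Real.sqrt_mul hai.le]
        exact Real.sqrt_le_sqrt hmul.le
      rw [div_le_div_iff₀ (by positivity) (by positivity)]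
      nlinarith
  -- pointwise inequality and equality condition
  have hkey : ∀ i : Fin (I + 1),
      Real.sqrt (c i) * Real.sqrt (b i) ≤
        Real.sqrt (a i) * Real.sqrt (b i) + (c i - a i) * t i ∧
      (Real.sqrt (c i) * Real.sqrt (b i) =
        Real.sqrt (a i) * Real.sqrt (b i) + (c i - a i) * t i ↔ c i = a i) := by
    intro i
    by_cases h : a i = 0
    · have hci : c i = 0 := hc0' i h
      rw [h, hci]
      simp
    · have hai : 0 < a i := (ha0 i).lt_of_ne' h
      have hti : t i = Real.sqrt (b i) / (2 * Real.sqrt (a i)) := if_neg h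
      have hA' : Real.sqrt (a i) * Real.sqrt (a i) = a i := Real.mul_self_sqrt hai.le
      have hC' : Real.sqrt (c i) * Real.sqrt (c i) = c i := Real.mul_self_sqrt (hc0 i)
      have hp := ptwise_aux (Real.sqrt (a i)) (Real.sqrt (c i)) (Real.sqrt (b i))
        (Real.sqrt_pos.mpr hai) (Real.sqrt_nonneg _) (Real.sqrt_pos.mpr (hb0 i))
      rw [hA', hC'] at hp
      rw [hti]
      refine ⟨hp.1, hp.2.trans ?_⟩
      rw [Real.sqrt_inj (hc0 i) (ha0 i)]
  -- Abel summation: the correction term is nonpositive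
  set D : ℕ → ℝ := fun k => if h : k < I + 1 then c ⟨k, h⟩ - a ⟨k, h⟩ else 0 with hD
  set Tn : ℕ → ℝ := fun k => if h : k < I + 1 then t ⟨k, h⟩ else 0 with hTn
  have h1 : ∑ i, (c i - a i) * t i = ∑ k ∈ range (I + 1), Tn k • D k := by
    rw [← Fin.sum_univ_eq_sum_range (fun k => Tn k • D k) (I + 1)]
    refine Finset.sum_congr rfl fun i _ => ?_
    simp only [hD, hTn, dif_pos i.isLt, Fin.eta, smul_eq_mul]
    ring
  have hIicR : ∀ (k : ℕ) (h : k < I + 1),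
      ∑ j ∈ range (k + 1), D j = ∑ i ∈ Iic (⟨k, h⟩ : Fin (I + 1)), (c i - a i) := by
    intro k h
    have hmap : ∑ j ∈ (Iic (⟨k, h⟩ : Fin (I + 1))).map Fin.valEmbedding, D j =
        ∑ i ∈ Iic (⟨k, h⟩ : Fin (I + 1)), (c i - a i) := by
      rw [Finset.sum_map]
      refine Finset.sum_congr rfl fun i _ => ?_
      simp only [hD, Fin.valEmbedding_apply, dif_pos i.isLt, Fin.eta]
    rw [← hmap, Fin.map_valEmbedding_Iic]
    congr 1
    ext j
    simp [Nat.lt_succ_iff]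
  have hS : ∀ (k : ℕ), k < I + 1 → 0 ≤ ∑ j ∈ range (k + 1), D j := by
    intro k h
    rw [hIicR k h, Finset.sum_sub_distrib]
    have := hmaj ⟨k, h⟩
    linarith
  have hSn : ∑ j ∈ range (I + 1), D j = 0 := by
    have := hIicR I (by omega)
    rw [this, Finset.sum_sub_distrib]
    have hfull : Iic (⟨I, by omega⟩ : Fin (I + 1)) = Finset.univ := by
      ext i; simp [Fin.le_def, Nat.lt_succ_iff.mp i.isLt]
    rw [hfull, hc1, ha1, sub_self]
  have habel : ∑ i, (c i - a i) * t i ≤ 0 := by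
    rw [h1, Finset.sum_range_by_parts]
    simp only [Nat.add_sub_cancel]
    rw [hSn, smul_zero, zero_sub]
    refine neg_nonpos.mpr (Finset.sum_nonneg fun i hi => ?_)
    have hiI : i < I := mem_range.mp hi
    have hmono : Tn i ≤ Tn (i + 1) := by
      simp only [hTn, dif_pos (by omega : i < I + 1), dif_pos (by omega : i + 1 < I + 1)]
      exact ht_mono _ _ (by simp [Fin.lt_def])
    exact smul_nonneg (by linarith) (hS i (by omega))
  have hsum1 : ∑ i, Real.sqrt (c i) * Real.sqrt (b i) ≤
      ∑ i, (Real.sqrt (a i) * Real.sqrt (b i) + (c i - a i) * t i) :=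
    Finset.sum_le_sum fun i _ => (hkey i).1
  rw [Finset.sum_add_distrib] at hsum1
  constructor
  · linarith
  · constructor
    · intro heq
      have habel0 : ∑ i, (c i - a i) * t i = 0 := le_antisymm habel (by linarith)
      have hsumeq : ∑ i, Real.sqrt (c i) * Real.sqrt (b i) =
          ∑ i, (Real.sqrt (a i) * Real.sqrt (b i) + (c i - a i) * t i) := by
        rw [Finset.sum_add_distrib, habel0, add_zero]; exact heq
      have hpt : ∀ i ∈ Finset.univ, Real.sqrt (c i) * Real.sqrt (b i) =
          Real.sqrt (a i) * Real.sqrt (b i) + (c i - a i) * t i := by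
        by_contra h
        push_neg at h
        obtain ⟨i, _, hne⟩ := h
        have hlt := lt_of_le_of_ne (hkey i).1 hne
        have := Finset.sum_lt_sum (fun j _ => (hkey j).1) ⟨i, mem_univ i, hlt⟩
        exact absurd hsumeq (ne_of_lt this)
      funext i
      exact (hkey i).2.mp (hpt i (mem_univ i))
    · intro h; rw [h]
end

section
/- Let P be a probability distribution on {1,...,M}, let L ≥ 1, and let U_L be the uniform distribution on {1,...,L}. The maximum fidelity over majorization conversions from P to U_L equals √(1/L) · (Σ_{j=1}^{J-1} √(P↓(j)) + √((L+1-J) · Σ_{i=J}^{M} P↓(i))), where J = max of {1} ∪ {2 ≤ j ≤ L : Σ_{i=j}^{M} P↓(i) / (L+1-j) < P↓(j-1)} and P↓ are the values of P sorted decreasingly. -/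
open scoped Classical

/-- The sum of the `l` largest values of a finitely supported `P : ℕ → ℝ`. -/
noncomputable def maxSumN (P : ℕ → ℝ) (l : ℕ) : ℝ :=
  sSup {r | ∃ s : Finset ℕ, s.card ≤ l ∧ r = ∑ x ∈ s, P x}

/-- `P ≺ Q` : `P` is majorized by `Q`. -/
def MajorizedN (P Q : ℕ → ℝ) : Prop :=
  ∀ l : ℕ, maxSumN P l ≤ maxSumN Q l

/-- The index `J_{P,L}` from the statement, for a decreasingly sorted distribution `Pd`
supported on `{1,...,M}`. -/
noncomputable def Jlevel (Pd : ℕ → ℝ) (M L : ℕ) : ℕ :=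
  max 1 (((Finset.Icc 2 L).filter
    (fun j => (∑ i ∈ Finset.Icc j M, Pd i) / ((L : ℝ) + 1 - j) < Pd (j - 1))).sup id)

/-! The optimum is attained by the water-filling distribution: keep the `J - 1` largest values of
`P` and spread the remaining mass evenly over the other `L + 1 - J` slots; the choice of `J` is
exactly what makes this sorted distribution majorize `P`. For the upper bound, sort a competitor
`Q` decreasingly, so that majorization bounds its first `J - 1` partial sums from below by those
of `P`. Bounding each `√(Q i)` by the tangent line of `√` at the corresponding value of the
water-filling distribution, an Abel summation shows that the linear terms contribute at most `0`,
because the slopes `1 / (2 √·)` increase along the sorted order and are constant on the last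
`L + 1 - J` slots. -/

open Finset

theorem sqrt_le_sqrt_add_sub_div {a b : ℝ} (ha : 0 < a) (hb : 0 ≤ b) :
    √b ≤ √a + (b - a) / (2 * √a) := by
  have hsa : 0 < √a := Real.sqrt_pos.2 ha
  rw [← sub_le_iff_le_add', le_div_iff₀ (by positivity)]
  nlinarith [sq_nonneg (√b - √a), Real.sq_sqrt ha.le, Real.sq_sqrt hb]

theorem sum_Icc_mul_le_mul_sum_Icc (w d : ℕ → ℝ) (n : ℕ) {W : ℝ}
    (hw : MonotoneOn w (Set.Icc 1 n)) (hW : ∀ i ∈ Set.Icc 1 n, w i ≤ W)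
    (hd : ∀ k ≤ n, 0 ≤ ∑ i ∈ Icc 1 k, d i) :
    ∑ i ∈ Icc 1 n, w i * d i ≤ W * ∑ i ∈ Icc 1 n, d i := by
  induction n generalizing W with
  | zero => simp
  | succ n ih =>
    have hmem : n + 1 ∈ Set.Icc 1 (n + 1) := ⟨by omega, le_rfl⟩
    have hsub : Set.Icc 1 n ⊆ Set.Icc 1 (n + 1) := Set.Icc_subset_Icc_right (by omega)
    have ih' := ih (hw.mono hsub)
      (fun i hi => hw (hsub hi) hmem (hi.2.trans (Nat.le_succ n)))
      (fun k hk => hd k (by omega))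
    rw [sum_Icc_succ_top (by omega), sum_Icc_succ_top (by omega)]
    calc ∑ i ∈ Icc 1 n, w i * d i + w (n + 1) * d (n + 1)
        ≤ w (n + 1) * (∑ i ∈ Icc 1 n, d i + d (n + 1)) := by linarith
      _ ≤ W * (∑ i ∈ Icc 1 n, d i + d (n + 1)) := by
        refine mul_le_mul_of_nonneg_right (hW _ hmem) ?_
        simpa only [sum_Icc_succ_top (by omega : 1 ≤ n + 1)] using hd (n + 1) le_rfl

theorem sum_Icc_eq_sum_Icc_add_sum_Ioc (f : ℕ → ℝ) {n k : ℕ} (h : n ≤ k) :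
    ∑ i ∈ Icc 1 k, f i = ∑ i ∈ Icc 1 n, f i + ∑ i ∈ Ioc n k, f i := by
  have hIoc : ∀ m, Icc 1 m = Ioc 0 m := Icc_add_one_left_eq_Ioc 0
  rw [hIoc, hIoc]
  exact (sum_Ioc_consecutive f (Nat.zero_le n) h).symm

theorem sum_Icc_add_sum_Icc_of_support {f : ℕ → ℝ} {N : ℕ} (hf : ∀ i ∉ Icc 1 N, f i = 0)
    (k : ℕ) : ∑ i ∈ Icc 1 k, f i + ∑ i ∈ Icc (k + 1) N, f i = ∑ i ∈ Icc 1 N, f i := by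
  rw [Icc_add_one_left_eq_Ioc]
  rcases le_total k N with hk | hk
  · exact (sum_Icc_eq_sum_Icc_add_sum_Ioc f hk).symm
  · rw [Ioc_eq_empty_of_le hk, sum_empty, add_zero, sum_Icc_eq_sum_Icc_add_sum_Ioc f hk,
      add_eq_left]
    exact sum_eq_zero fun i hi => hf i (by simp only [mem_Icc, mem_Ioc] at hi ⊢; omega)

theorem maxSumN_comp_perm (f : ℕ → ℝ) (σ : Equiv.Perm ℕ) (l : ℕ) :
    maxSumN (f ∘ σ) l = maxSumN f l := by
  unfold maxSumN
  congr 1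
  ext r
  constructor
  · rintro ⟨s, hs, rfl⟩
    exact ⟨s.map σ.toEmbedding, by simpa using hs, by simp [sum_map]⟩
  · rintro ⟨s, hs, rfl⟩
    exact ⟨s.map σ.symm.toEmbedding, by simpa using hs, by simp [sum_map]⟩

theorem sum_le_sum_Icc_card_of_antitoneOn {f : ℕ → ℝ} {N : ℕ} (hf : AntitoneOn f (Set.Icc 1 N))
    (t : Finset ℕ) (ht : t ⊆ Icc 1 N) : ∑ i ∈ t, f i ≤ ∑ i ∈ Icc 1 t.card, f i := by
  induction t using Finset.induction_on_max with
  | empty => simp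
  | insert a t hlt ih =>
    obtain ⟨ha1, haN⟩ := mem_Icc.1 (ht (mem_insert_self a t))
    have hcard : t.card + 1 ≤ a := by
      have := card_le_card fun x hx =>
        mem_Ico.2 ⟨(mem_Icc.1 (ht (mem_insert_of_mem hx))).1, hlt x hx⟩
      rw [Nat.card_Ico] at this
      omega
    have hat : a ∉ t := fun h => lt_irrefl a (hlt a h)
    rw [sum_insert hat, card_insert_of_notMem hat, sum_Icc_succ_top (by omega), add_comm]
    exact add_le_add (ih ((subset_insert a t).trans ht))
      (hf ⟨by omega, by omega⟩ ⟨ha1, haN⟩ hcard)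

theorem maxSumN_eq_sum_Icc {f : ℕ → ℝ} {N : ℕ} (h0 : ∀ i, 0 ≤ f i)
    (hsupp : ∀ i ∉ Icc 1 N, f i = 0) (hf : AntitoneOn f (Set.Icc 1 N)) (k : ℕ) :
    maxSumN f k = ∑ i ∈ Icc 1 k, f i := by
  refine IsGreatest.csSup_eq ⟨⟨Icc 1 k, by simp, rfl⟩, ?_⟩
  rintro _ ⟨t, ht, rfl⟩
  calc ∑ i ∈ t, f i = ∑ i ∈ t ∩ Icc 1 N, f i :=
        (sum_subset inter_subset_left fun i hi hi' =>
          hsupp i fun h => hi' (mem_inter.2 ⟨hi, h⟩)).symm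
    _ ≤ ∑ i ∈ Icc 1 (t ∩ Icc 1 N).card, f i :=
        sum_le_sum_Icc_card_of_antitoneOn hf _ inter_subset_right
    _ ≤ ∑ i ∈ Icc 1 k, f i :=
        sum_le_sum_of_subset_of_nonneg
          (Icc_subset_Icc_right ((card_le_card inter_subset_left).trans ht))
          fun i _ _ => h0 i

theorem exists_perm_antitoneOn_comp {α : Type*} [LinearOrder α] (f : ℕ → α) (s : Finset ℕ) :
    ∃ σ : Equiv.Perm ℕ, {x | σ x ≠ x} ⊆ s ∧ AntitoneOn (f ∘ σ) s := by
  let e := s.orderIsoOfFin rfl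
  let g : Fin s.card → αᵒᵈ := fun j => OrderDual.toDual (f (e j))
  refine ⟨(Tuple.sort g).extendDomain e.toEquiv, fun x hx => ?_, fun x hx y hy hxy => ?_⟩
  · by_contra h
    exact hx (Equiv.Perm.extendDomain_apply_not_subtype _ _ h)
  · simp only [Function.comp_apply, Equiv.Perm.extendDomain_apply_subtype _ _ hx,
      Equiv.Perm.extendDomain_apply_subtype _ _ hy]
    exact Tuple.monotone_sort g (e.symm.monotone (show (⟨x, hx⟩ : s) ≤ ⟨y, hy⟩ from hxy))

theorem sqrt_mul_eq_mul_sqrt_div {m : ℝ} (hm : 0 ≤ m) (T : ℝ) : √(m * T) = m * √(T / m) := by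
  rcases hm.eq_or_lt with rfl | hm
  · simp
  · rw [← Real.sqrt_sq hm.le, ← Real.sqrt_mul (sq_nonneg m), Real.sqrt_sq hm.le]
    congr 1
    field_simp

theorem sum_sqrt_mul_const (f : ℕ → ℝ) (s : Finset ℕ) {a : ℝ} (ha : 0 ≤ a) :
    ∑ i ∈ s, √(f i * a) = √a * ∑ i ∈ s, √(f i) := by
  simp_rw [Real.sqrt_mul' _ ha, ← sum_mul, mul_comm]

theorem sum_sqrt_le_of_pos (q : ℕ → ℝ) (s : Finset ℕ) {c : ℝ} (hq : ∀ i, 0 ≤ q i) (hc : 0 < c) :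
    ∑ i ∈ s, √(q i) ≤ s.card * √c + 1 / (2 * √c) * (∑ i ∈ s, q i - s.card * c) := by
  have hsc : 0 < √c := Real.sqrt_pos.2 hc
  calc ∑ i ∈ s, √(q i) ≤ ∑ i ∈ s, (√c + (q i - c) / (2 * √c)) :=
        sum_le_sum fun i _ => sqrt_le_sqrt_add_sub_div hc (hq i)
    _ = s.card * √c + 1 / (2 * √c) * (∑ i ∈ s, q i - s.card * c) := by
        rw [sum_add_distrib, ← sum_div, sum_sub_distrib, sum_const, sum_const, nsmul_eq_mul,
          nsmul_eq_mul]
        ring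

theorem sum_sqrt_le_add_mul_sum_sub (a q : ℕ → ℝ) (n : ℕ) {W : ℝ} (hq : ∀ i, 0 ≤ q i)
    (ha : AntitoneOn a (Set.Icc 1 n)) (hapos : ∀ i ∈ Set.Icc 1 n, 0 < a i)
    (hW : ∀ i ∈ Set.Icc 1 n, 1 / (2 * √(a i)) ≤ W)
    (hdom : ∀ k ≤ n, ∑ i ∈ Icc 1 k, a i ≤ ∑ i ∈ Icc 1 k, q i) :
    ∑ i ∈ Icc 1 n, √(q i) ≤ ∑ i ∈ Icc 1 n, √(a i) + W * ∑ i ∈ Icc 1 n, (q i - a i) := by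
  have hmono : MonotoneOn (fun i => 1 / (2 * √(a i))) (Set.Icc 1 n) := fun i hi j hj hij =>
    one_div_le_one_div_of_le (by have := hapos j hj; positivity) (by gcongr; exact ha hi hj hij)
  calc ∑ i ∈ Icc 1 n, √(q i)
      ≤ ∑ i ∈ Icc 1 n, (√(a i) + 1 / (2 * √(a i)) * (q i - a i)) := by
        refine sum_le_sum fun i hi => ?_
        rw [one_div_mul_eq_div]
        exact sqrt_le_sqrt_add_sub_div (hapos i (by simpa using hi)) (hq i)
    _ ≤ ∑ i ∈ Icc 1 n, √(a i) + W * ∑ i ∈ Icc 1 n, (q i - a i) := by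
        rw [sum_add_distrib]
        gcongr
        refine sum_Icc_mul_le_mul_sum_Icc _ _ n hmono hW fun k hk => ?_
        rw [sum_sub_distrib]
        linarith [hdom k hk]

theorem sum_sqrt_le_of_sum_Icc_le (a q : ℕ → ℝ) {n L : ℕ} {c : ℝ} (hnL : n ≤ L)
    (hq : ∀ i, 0 ≤ q i) (ha : AntitoneOn a (Set.Icc 1 n)) (hc : 0 ≤ c)
    (hca : ∀ i ∈ Set.Icc 1 n, c < a i)
    (hsum : ∑ i ∈ Icc 1 L, q i = ∑ i ∈ Icc 1 n, a i + (L - n) * c)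
    (hdom : ∀ k ≤ n, ∑ i ∈ Icc 1 k, a i ≤ ∑ i ∈ Icc 1 k, q i) :
    ∑ i ∈ Icc 1 L, √(q i) ≤ ∑ i ∈ Icc 1 n, √(a i) + (L - n) * √c := by
  have hD : 0 ≤ ∑ i ∈ Icc 1 n, (q i - a i) := by
    rw [sum_sub_distrib]; linarith [hdom n le_rfl]
  have htail : ∑ i ∈ Ioc n L, q i = (L - n) * c - ∑ i ∈ Icc 1 n, (q i - a i) := by
    rw [sum_Icc_eq_sum_Icc_add_sum_Ioc q hnL] at hsum
    rw [sum_sub_distrib]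
    linarith
  have hapos : ∀ i ∈ Set.Icc 1 n, 0 < a i := fun i hi => hc.trans_lt (hca i hi)
  have hcard : ((Ioc n L).card : ℝ) = L - n := by rw [Nat.card_Ioc, Nat.cast_sub hnL]
  rw [sum_Icc_eq_sum_Icc_add_sum_Ioc _ hnL]
  rcases hc.eq_or_lt with rfl | hc
  · have htail_nonneg := sum_nonneg fun i (_ : i ∈ Ioc n L) => hq i
    have hD0 : ∑ i ∈ Icc 1 n, (q i - a i) = 0 := by linarith
    have hzero : ∀ i ∈ Ioc n L, q i = 0 :=
      (sum_eq_zero_iff_of_nonneg fun i _ => hq i).1 (by linarith)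
    have hW : ∀ i ∈ Set.Icc 1 n, 1 / (2 * √(a i)) ≤ 1 / (2 * √(a n)) := fun i hi =>
      one_div_le_one_div_of_le (by have := hapos n ⟨hi.1.trans hi.2, le_rfl⟩; positivity)
        (by gcongr; exact ha hi ⟨hi.1.trans hi.2, le_rfl⟩ hi.2)
    have htail0 : ∑ i ∈ Ioc n L, √(q i) = 0 :=
      sum_eq_zero fun i hi => by rw [hzero i hi, Real.sqrt_zero]
    have := sum_sqrt_le_add_mul_sum_sub a q n hq ha hapos hW hdom
    rw [hD0, mul_zero, add_zero] at this
    rw [htail0, Real.sqrt_zero, mul_zero, add_zero, add_zero]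
    exact this
  · have htail_le := sum_sqrt_le_of_pos q (Ioc n L) hq hc
    have hhead := sum_sqrt_le_add_mul_sum_sub a q n (W := 1 / (2 * √c)) hq ha hapos (fun i hi =>
      one_div_le_one_div_of_le (by positivity) (by gcongr; exact (hca i hi).le)) hdom
    rw [hcard, htail] at htail_le
    linarith

theorem sum_Icc_le_sum_Icc_of_support {f : ℕ → ℝ} {N : ℕ} (h0 : ∀ i, 0 ≤ f i)
    (hf : ∀ i ∉ Icc 1 N, f i = 0) (k : ℕ) : ∑ i ∈ Icc 1 k, f i ≤ ∑ i ∈ Icc 1 N, f i := by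
  rw [← sum_Icc_add_sum_Icc_of_support hf k]
  linarith [sum_nonneg fun i (_ : i ∈ Icc (k + 1) N) => h0 i]

theorem sum_Icc_le_of_mul_le_sub (x : ℕ → ℝ) {n L : ℕ} {c t : ℝ}
    (hc : ∑ i ∈ Icc 1 n, x i + (L - n) * c = t) (hL : ∑ i ∈ Icc 1 L, x i ≤ t)
    (hx : ∀ m, n < m → m < L → x m * (L - m) ≤ t - ∑ i ∈ Icc 1 m, x i)
    (k : ℕ) (hnk : n ≤ k) (hkL : k ≤ L) :
    ∑ i ∈ Icc 1 k, x i ≤ ∑ i ∈ Icc 1 n, x i + (k - n) * c := by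
  -- invariant: the mass left after slot `k` still fills each of the last `L - k` slots to level `c`
  suffices h : (L - k) * c ≤ t - ∑ i ∈ Icc 1 k, x i by linarith
  induction k, hnk using Nat.le_induction with
  | base => linarith
  | succ k hnk ih =>
    rcases Nat.lt_or_eq_of_le hkL with hlt | rfl
    · have hxk := hx (k + 1) (by omega) hlt
      have ih := ih (by omega)
      have hpos : (0 : ℝ) < L - (k + 1) := by
        rw [sub_pos]; exact_mod_cast hlt
      rw [sum_Icc_succ_top (by omega)] at hxk ⊢
      push_cast at hxk ⊢
      refine le_of_mul_le_mul_left ?_ (by linarith : (0 : ℝ) < L - k)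
      nlinarith [mul_le_mul_of_nonneg_left ih hpos.le]
    · simpa using hL

/-- `c` is a water level for the sorted distribution `x` on `L` slots if keeping the `n` largest
values of `x` and spreading the remaining mass evenly, as `c`, over the other `L - n` slots gives a
sorted distribution majorizing `x`. -/
structure IsWaterLevel (x : ℕ → ℝ) (n L : ℕ) (c : ℝ) : Prop where
  lt : n < L
  nonneg : 0 ≤ c
  sum_add_mul : ∑ i ∈ Icc 1 n, x i + (L - n) * c = 1
  lt_apply : ∀ i ∈ Set.Icc 1 n, c < x i
  sum_Icc_le : ∀ k, n ≤ k → k ≤ L → ∑ i ∈ Icc 1 k, x i ≤ ∑ i ∈ Icc 1 n, x i + (k - n) * c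

noncomputable def waterFill (x : ℕ → ℝ) (n L : ℕ) (c : ℝ) (i : ℕ) : ℝ :=
  if i ∈ Icc 1 n then x i else if i ∈ Icc 1 L then c else 0

section waterFill

variable {x : ℕ → ℝ} {n L : ℕ} {c : ℝ}

theorem waterFill_nonneg (hx : ∀ i, 0 ≤ x i) (hc : 0 ≤ c) (i : ℕ) : 0 ≤ waterFill x n L c i := by
  unfold waterFill
  split_ifs <;> simp [hx, hc]

theorem waterFill_eq_zero (hnL : n ≤ L) {i : ℕ} (hi : i ∉ Icc 1 L) : waterFill x n L c i = 0 := by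
  have : i ∉ Icc 1 n := fun h => hi (Icc_subset_Icc_right hnL h)
  simp [waterFill, this, hi]

theorem sum_Icc_waterFill_of_le {k : ℕ} (hk : k ≤ n) :
    ∑ i ∈ Icc 1 k, waterFill x n L c i = ∑ i ∈ Icc 1 k, x i :=
  sum_congr rfl fun _ hi => if_pos (Icc_subset_Icc_right hk hi)

theorem sum_Icc_comp_waterFill (g : ℝ → ℝ) {k : ℕ} (hnk : n ≤ k) (hkL : k ≤ L) :
    ∑ i ∈ Icc 1 k, g (waterFill x n L c i) = ∑ i ∈ Icc 1 n, g (x i) + (k - n) * g c := by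
  have hhead : ∀ i ∈ Icc 1 n, g (waterFill x n L c i) = g (x i) := fun i hi => by
    rw [waterFill, if_pos hi]
  have htail : ∀ i ∈ Ioc n k, g (waterFill x n L c i) = g c := fun i hi => by
    simp only [mem_Ioc] at hi
    simp [waterFill, show ¬ i ≤ n by omega, show 1 ≤ i ∧ i ≤ L by omega]
  rw [sum_Icc_eq_sum_Icc_add_sum_Ioc _ hnk, sum_congr rfl hhead, sum_congr rfl htail,
    sum_const, Nat.card_Ioc, nsmul_eq_mul, Nat.cast_sub hnk]

theorem antitoneOn_waterFill (hx : AntitoneOn x (Set.Icc 1 n)) (hc : ∀ i ∈ Set.Icc 1 n, c < x i) :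
    AntitoneOn (waterFill x n L c) (Set.Icc 1 L) := by
  intro i hi j hj hij
  simp only [Set.mem_Icc] at hi hj
  by_cases hjn : j ≤ n
  · simp only [waterFill, mem_Icc, hi.1, hj.1, hjn, show i ≤ n by omega, and_self, if_true]
    exact hx ⟨hi.1, by omega⟩ ⟨hj.1, hjn⟩ hij
  · by_cases hin : i ≤ n
    · simp only [waterFill, mem_Icc, hi.1, hj.1, hin, hjn, hj.2, and_self, and_false, if_true,
        if_false]
      exact (hc i ⟨hi.1, hin⟩).le
    · simp [waterFill, hin, hjn, hi, hj]

end waterFill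

namespace IsWaterLevel

variable {x : ℕ → ℝ} {n L : ℕ} {c : ℝ}

theorem majorizedN_waterFill (hw : IsWaterLevel x n L c) (hx0 : ∀ i, 0 ≤ x i)
    (hx : AntitoneOn x (Set.Icc 1 n)) (hx1 : ∀ k, ∑ i ∈ Icc 1 k, x i ≤ 1) {P : ℕ → ℝ}
    (hP : ∀ k, maxSumN P k = ∑ i ∈ Icc 1 k, x i) : MajorizedN P (waterFill x n L c) := by
  have hsupp : ∀ i ∉ Icc 1 L, waterFill x n L c i = 0 := fun _ => waterFill_eq_zero hw.lt.le
  intro k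
  rw [hP, maxSumN_eq_sum_Icc (waterFill_nonneg hx0 hw.nonneg) hsupp
    (antitoneOn_waterFill hx hw.lt_apply)]
  rcases le_total k n with hkn | hnk
  · rw [sum_Icc_waterFill_of_le hkn]
  rcases le_total k L with hkL | hLk
  · exact (hw.sum_Icc_le k hnk hkL).trans (sum_Icc_comp_waterFill id hnk hkL).ge
  · calc ∑ i ∈ Icc 1 k, x i ≤ ∑ i ∈ Icc 1 n, x i + (L - n) * c := hw.sum_add_mul ▸ hx1 k
      _ = ∑ i ∈ Icc 1 L, waterFill x n L c i := (sum_Icc_comp_waterFill id hw.lt.le le_rfl).symm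
      _ = ∑ i ∈ Icc 1 k, waterFill x n L c i :=
        sum_subset (Icc_subset_Icc_right hLk) fun i _ hi => hsupp i hi

theorem sum_sqrt_le (hw : IsWaterLevel x n L c) (hx : AntitoneOn x (Set.Icc 1 n))
    {P Q : ℕ → ℝ} (hP : ∀ k, maxSumN P k = ∑ i ∈ Icc 1 k, x i) (hQ0 : ∀ i, 0 ≤ Q i)
    (hQsupp : ∀ i ∉ Icc 1 L, Q i = 0) (hQ1 : ∑ i ∈ Icc 1 L, Q i = 1) (hPQ : MajorizedN P Q) :
    ∑ i ∈ Icc 1 L, √(Q i) ≤ ∑ i ∈ Icc 1 n, √(x i) + (L - n) * √c := by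
  obtain ⟨σ, hσ, hanti⟩ := exists_perm_antitoneOn_comp Q (Icc 1 L)
  have hperm : ∀ g : ℝ → ℝ, ∑ i ∈ Icc 1 L, g (Q (σ i)) = ∑ i ∈ Icc 1 L, g (Q i) :=
    fun g => Equiv.Perm.sum_comp σ _ (g ∘ Q) hσ
  have hsupp : ∀ i ∉ Icc 1 L, (Q ∘ σ) i = 0 := fun i hi => by
    rw [Function.comp_apply, show σ i = i from not_not.1 fun h => hi (hσ h), hQsupp i hi]
  rw [← hperm]
  refine sum_sqrt_le_of_sum_Icc_le x (Q ∘ σ) hw.lt.le (fun i => hQ0 _) hx hw.nonneg hw.lt_apply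
    ((hperm id).trans (hQ1.trans hw.sum_add_mul.symm)) fun k _ => ?_
  rw [← hP, ← maxSumN_eq_sum_Icc (f := Q ∘ σ) (fun i => hQ0 _) hsupp (by simpa using hanti),
    maxSumN_comp_perm]
  exact hPQ k

end IsWaterLevel

section Jlevel

variable (Pd : ℕ → ℝ) (M L : ℕ)

theorem one_le_Jlevel : 1 ≤ Jlevel Pd M L := le_max_left _ _

theorem Jlevel_le (hL : 0 < L) : Jlevel Pd M L ≤ L :=
  max_le hL (Finset.sup_le fun _ hj => (mem_Icc.1 (mem_filter.1 hj).1).2)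

theorem Jlevel_spec (h : 2 ≤ Jlevel Pd M L) :
    (∑ i ∈ Icc (Jlevel Pd M L) M, Pd i) / ((L : ℝ) + 1 - Jlevel Pd M L) <
      Pd (Jlevel Pd M L - 1) := by
  unfold Jlevel at h ⊢
  set F := (Icc 2 L).filter
    (fun j => (∑ i ∈ Icc j M, Pd i) / ((L : ℝ) + 1 - j) < Pd (j - 1))
  rw [max_eq_right (by omega)]
  obtain ⟨j, hj, hje⟩ := exists_mem_eq_sup F (nonempty_of_ne_empty fun hF => by simp [hF] at h) id
  rw [hje]
  exact (mem_filter.1 hj).2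

theorem le_of_Jlevel_lt (j : ℕ) (hj : Jlevel Pd M L < j) (hjL : j ≤ L) :
    Pd (j - 1) ≤ (∑ i ∈ Icc j M, Pd i) / ((L : ℝ) + 1 - j) := by
  by_contra! h
  have hmem : j ∈ (Icc 2 L).filter
      (fun j => (∑ i ∈ Icc j M, Pd i) / ((L : ℝ) + 1 - j) < Pd (j - 1)) :=
    mem_filter.2 ⟨mem_Icc.2 ⟨by linarith [one_le_Jlevel Pd M L], hjL⟩, h⟩
  exact absurd hj (not_lt.2 ((le_sup (f := id) hmem).trans (le_max_right 1 _)))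

end Jlevel

theorem isWaterLevel_Jlevel {Pd : ℕ → ℝ} {M L : ℕ} (hL : 0 < L) (hPd0 : ∀ i, 0 ≤ Pd i)
    (hsupp : ∀ i ∉ Icc 1 M, Pd i = 0) (hanti : AntitoneOn Pd (Set.Ici 1))
    (h1 : ∑ i ∈ Icc 1 M, Pd i = 1) :
    IsWaterLevel Pd (Jlevel Pd M L - 1) L
      ((∑ i ∈ Icc (Jlevel Pd M L) M, Pd i) / ((L : ℝ) - ↑(Jlevel Pd M L - 1))) := by
  have hJL := Jlevel_le Pd M L hL
  have hspec := Jlevel_spec Pd M L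
  have hnot := le_of_Jlevel_lt Pd M L
  obtain ⟨n, hJn⟩ : ∃ n, Jlevel Pd M L = n + 1 :=
    ⟨_, (Nat.sub_add_cancel (one_le_Jlevel Pd M L)).symm⟩
  have htail : ∀ m, ∑ i ∈ Icc (m + 1) M, Pd i = 1 - ∑ i ∈ Icc 1 m, Pd i := fun m => by
    rw [← h1, ← sum_Icc_add_sum_Icc_of_support hsupp m]
    ring
  have hslots : ∀ m, m < L → (0 : ℝ) < L - m := fun m hm => by
    rw [sub_pos]; exact_mod_cast hm
  rw [hJn] at hJL hspec hnot ⊢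
  simp only [Nat.add_sub_cancel, htail, Nat.cast_add, Nat.cast_one, add_sub_add_right_eq_sub]
    at hspec ⊢
  have hsum : ∑ i ∈ Icc 1 n, Pd i + (L - n) * ((1 - ∑ i ∈ Icc 1 n, Pd i) / (L - n)) = 1 := by
    field_simp [(hslots n hJL).ne']
    ring
  refine ⟨by omega, div_nonneg ?_ (hslots n hJL).le, hsum, fun i hi => ?_,
    sum_Icc_le_of_mul_le_sub (t := 1) Pd hsum ?_ fun m hnm hmL => ?_⟩
  · rw [← htail]
    exact sum_nonneg fun i _ => hPd0 i
  · exact (hspec (Nat.succ_le_succ (hi.1.trans hi.2))).trans_le (hanti hi.1 (hi.1.trans hi.2) hi.2)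
  · exact (sum_Icc_le_sum_Icc_of_support hPd0 hsupp L).trans h1.le
  · have := hnot (m + 1) (by omega) (by omega)
    simp only [Nat.add_sub_cancel, htail, Nat.cast_add, Nat.cast_one,
      add_sub_add_right_eq_sub] at this
    rwa [le_div_iff₀ (hslots m hmL)] at this

theorem stmt17_general (M L : ℕ) (hL : 0 < L)
    (P : ℕ → ℝ) (hP0 : ∀ i, 0 ≤ P i)
    (hPsupp : ∀ i ∉ Finset.Icc 1 M, P i = 0)
    (hP1 : ∑ i ∈ Finset.Icc 1 M, P i = 1)
    (Pd : ℕ → ℝ) (e : Equiv.Perm ℕ) (hPe : ∀ i, Pd i = P (e i))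
    (hPdsupp : ∀ i ∉ Finset.Icc 1 M, Pd i = 0)
    (hsort : ∀ i j : ℕ, 1 ≤ i → i ≤ j → Pd j ≤ Pd i) :
    IsGreatest
      {r | ∃ P' : ℕ → ℝ, (∀ i, 0 ≤ P' i) ∧ (∀ i ∉ Finset.Icc 1 L, P' i = 0) ∧
        (∑ i ∈ Finset.Icc 1 L, P' i = 1) ∧ MajorizedN P P' ∧
        r = ∑ i ∈ Finset.Icc 1 L, Real.sqrt (P' i * (L : ℝ)⁻¹)}
      (Real.sqrt ((L : ℝ)⁻¹) *
        ((∑ j ∈ Finset.Icc 1 (Jlevel Pd M L - 1), Real.sqrt (Pd j)) +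
          Real.sqrt (((L : ℝ) + 1 - (Jlevel Pd M L : ℝ)) *
            ∑ i ∈ Finset.Icc (Jlevel Pd M L) M, Pd i))) := by
  have hPd0 : ∀ i, 0 ≤ Pd i := fun i => hPe i ▸ hP0 (e i)
  have hanti : AntitoneOn Pd (Set.Ici 1) := fun i hi j _ hij => hsort i j hi hij
  have hantiIcc : ∀ m, AntitoneOn Pd (Set.Icc 1 m) := fun _ => hanti.mono Set.Icc_subset_Ici_self
  have hPdP : Pd = P ∘ e := funext hPe
  have hPd1 : ∑ i ∈ Icc 1 M, Pd i = 1 := by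
    rw [← hP1, ← finsum_eq_finsetSum_of_support_subset _ (Function.support_subset_iff'.2 hPdsupp),
      ← finsum_eq_finsetSum_of_support_subset _ (Function.support_subset_iff'.2 hPsupp), hPdP]
    exact finsum_comp_equiv e
  have hmaxP : ∀ k, maxSumN P k = ∑ i ∈ Icc 1 k, Pd i := fun k => by
    rw [← maxSumN_comp_perm P e, ← hPdP,
      maxSumN_eq_sum_Icc hPd0 hPdsupp (hantiIcc M)]
  have hw := isWaterLevel_Jlevel hL hPd0 hPdsupp hanti hPd1
  have hLinv : (0 : ℝ) ≤ (L : ℝ)⁻¹ := inv_nonneg.2 (Nat.cast_nonneg L)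
  rw [show (L : ℝ) + 1 - Jlevel Pd M L = L - ↑(Jlevel Pd M L - 1) by
      rw [Nat.cast_sub (one_le_Jlevel Pd M L)]; ring,
    sqrt_mul_eq_mul_sqrt_div (sub_nonneg.2 (by exact_mod_cast hw.lt.le))]
  refine ⟨⟨waterFill Pd _ L _, waterFill_nonneg hPd0 hw.nonneg,
    fun _ => waterFill_eq_zero hw.lt.le,
    (sum_Icc_comp_waterFill id hw.lt.le le_rfl).trans hw.sum_add_mul,
    hw.majorizedN_waterFill hPd0 (hantiIcc _)
      (fun k => (sum_Icc_le_sum_Icc_of_support hPd0 hPdsupp k).trans hPd1.le) hmaxP, ?_⟩, ?_⟩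
  · rw [sum_sqrt_mul_const _ _ hLinv, sum_Icc_comp_waterFill Real.sqrt hw.lt.le le_rfl]
  · rintro _ ⟨Q, hQ0, hQsupp, hQ1, hPQ, rfl⟩
    rw [sum_sqrt_mul_const _ _ hLinv]
    exact mul_le_mul_of_nonneg_left
      (hw.sum_sqrt_le (hantiIcc _) hmaxP hQ0 hQsupp hQ1 hPQ)
      (Real.sqrt_nonneg _)

theorem stmt17 (M L : ℕ) (hM : 0 < M) (hL : 0 < L)
    (P : ℕ → ℝ) (hP0 : ∀ i, 0 ≤ P i)
    (hPsupp : ∀ i ∉ Finset.Icc 1 M, P i = 0)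
    (hP1 : ∑ i ∈ Finset.Icc 1 M, P i = 1)
    (Pd : ℕ → ℝ) (e : Equiv.Perm ℕ) (hPe : ∀ i, Pd i = P (e i))
    (hPdsupp : ∀ i ∉ Finset.Icc 1 M, Pd i = 0)
    (hsort : ∀ i j : ℕ, 1 ≤ i → i ≤ j → Pd j ≤ Pd i) :
    IsGreatest
      {r | ∃ P' : ℕ → ℝ, (∀ i, 0 ≤ P' i) ∧ (∀ i ∉ Finset.Icc 1 L, P' i = 0) ∧
        (∑ i ∈ Finset.Icc 1 L, P' i = 1) ∧ MajorizedN P P' ∧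
        r = ∑ i ∈ Finset.Icc 1 L, Real.sqrt (P' i * (L : ℝ)⁻¹)}
      (Real.sqrt ((L : ℝ)⁻¹) *
        ((∑ j ∈ Finset.Icc 1 (Jlevel Pd M L - 1), Real.sqrt (Pd j)) +
          Real.sqrt (((L : ℝ) + 1 - (Jlevel Pd M L : ℝ)) *
            ∑ i ∈ Finset.Icc (Jlevel Pd M L) M, Pd i))) :=
  stmt17_general M L hL P hP0 hPsupp hP1 Pd e hPe hPdsupp hsort
end
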